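/- arXiv:1509.05586 — 2 statements merged into one kernel-verified Lean document; each statement's English description precedes it below -/
import Mathlib

section
/- If a 2-connected graph G has two odd circuits sharing at most one vertex, then G contains a totally odd subdivision of C3+. -/
open SimpleGraph

variable {V : Type*}

/-- A graph is 2-connected: connected, at least 3 vertices, and deleting any
vertex keeps it connected. -/
def TwoConnected (G : SimpleGraph V) : Prop :=
  G.Connected ∧ 3 ≤ Nat.card V ∧
    ∀ v : V, ((⊤ : G.Subgraph).deleteVerts {v}).coe.Connected

/-- A graph is non-bipartite iff it has an odd circuit. -/
def HasOddCircuit (G : SimpleGraph V) : Prop :=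
  ∃ (u : V) (c : G.Walk u u), c.IsCycle ∧ Odd c.length

/-- `G` contains a totally odd subdivision of `C3+` (triangle with a doubled
edge): equivalently, the union of an odd circuit and an odd path having exactly
its two distinct endpoints on the circuit. -/
def ContainsOddC3Plus (G : SimpleGraph V) : Prop :=
  ∃ (x : V) (c : G.Walk x x) (a b : V) (p : G.Walk a b),
    c.IsCycle ∧ Odd c.length ∧ p.IsPath ∧ Odd p.length ∧ a ≠ b ∧
    a ∈ c.support ∧ b ∈ c.support ∧
    ∀ w ∈ p.support, w ∈ c.support → w = a ∨ w = b

section Space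
variable [Fintype V] [DecidableEq V]

/-- `C` is the edge set of a circuit of `G`. -/
def IsCircuitSet (G : SimpleGraph V) (C : Finset (Sym2 V)) : Prop :=
  ∃ (u : V) (c : G.Walk u u), c.IsCycle ∧ C = c.edges.toFinset

/-- incidence vector over `𝔽₂` of a set of edges -/
def edgeInd (C : Finset (Sym2 V)) : Sym2 V → ZMod 2 :=
  fun e => if e ∈ C then 1 else 0

/-- the cycle space of `G`: the `𝔽₂`-span of incidence vectors of circuits -/
def cycleSpace (G : SimpleGraph V) : Submodule (ZMod 2) (Sym2 V → ZMod 2) :=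
  Submodule.span (ZMod 2) {x | ∃ C, IsCircuitSet G C ∧ x = edgeInd C}

/-- `C` is a cycle of `G` (an element of the cycle space). -/
def IsCycleSet (G : SimpleGraph V) (C : Finset (Sym2 V)) : Prop :=
  edgeInd C ∈ cycleSpace G

/-- `B` is a cycle basis of `G`: a family of cycles whose incidence vectors
form a basis of the cycle space. -/
def IsCycleBasis (G : SimpleGraph V) (B : Finset (Finset (Sym2 V))) : Prop :=
  (∀ C ∈ B, IsCycleSet G C) ∧
  LinearIndependent (ZMod 2) (fun C : B => edgeInd C.1) ∧
  Submodule.span (ZMod 2) (edgeInd '' (B : Set (Finset (Sym2 V)))) = cycleSpace G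

end Space

/-- data of a potential ear: two endpoints and a walk between them -/
abbrev EarData (G : SimpleGraph V) := Σ a : V, Σ b : V, G.Walk a b

/-- the union of a base circuit and a list of ears, as a subgraph -/
def earsUnion {G : SimpleGraph V} {x : V} (base : G.Walk x x)
    (ears : List (EarData G)) : G.Subgraph :=
  ears.foldl (fun H e => H ⊔ e.2.2.toSubgraph) base.toSubgraph

/-- `e` is an ear of the subgraph `H`: a path with exactly its two distinct
endpoints in `H`, all edges new. -/
def IsEar {G : SimpleGraph V} (H : G.Subgraph) (e : EarData G) : Prop :=
  e.2.2.IsPath ∧ e.1 ≠ e.2.1 ∧ e.1 ∈ H.verts ∧ e.2.1 ∈ H.verts ∧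
  (∀ v ∈ e.2.2.support, v ≠ e.1 → v ≠ e.2.1 → v ∉ H.verts) ∧
  ∀ ed ∈ e.2.2.edges, ed ∉ H.edgeSet

/-- an (open) ear-decomposition of `G` -/
structure EarDecomposition (G : SimpleGraph V) where
  x : V
  base : G.Walk x x
  base_cycle : base.IsCycle
  ears : List (EarData G)
  ear_cond : ∀ i (h : i < ears.length),
    IsEar (earsUnion base (ears.take i)) (ears.get ⟨i, h⟩)
  union_top : earsUnion base ears = ⊤

/-- an ear-decomposition is odd if the base circuit and all ears are odd -/
def EarDecomposition.IsOdd {G : SimpleGraph V} (ed : EarDecomposition G) : Prop :=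
  Odd ed.base.length ∧ ∀ e ∈ ed.ears, Odd e.2.2.length

/-- `G` is a totally odd subdivision of `K₄`. -/
def IsTotallyOddK4 (G : SimpleGraph V) : Prop :=
  ∃ (b : Fin 4 → V) (p : ∀ i j : Fin 4, i < j → G.Walk (b i) (b j)),
    Function.Injective b ∧
    (∀ i j h, (p i j h).IsPath ∧ Odd (p i j h).length) ∧
    (∀ i j h i' j' h', (i, j) ≠ (i', j') →
      ∀ v ∈ (p i j h).support, v ∈ (p i' j' h').support →
        (v = b i ∨ v = b j) ∧ (v = b i' ∨ v = b j')) ∧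
    (⨆ i, ⨆ j, ⨆ h : i < j, (p i j h).toSubgraph) = ⊤

/-- `G` contains a totally odd subdivision of `K₄` as a subgraph. -/
def ContainsTotallyOddK4 (G : SimpleGraph V) : Prop :=
  ∃ (b : Fin 4 → V) (p : ∀ i j : Fin 4, i < j → G.Walk (b i) (b j)),
    Function.Injective b ∧
    (∀ i j h, (p i j h).IsPath ∧ Odd (p i j h).length) ∧
    (∀ i j h i' j' h', (i, j) ≠ (i', j') →
      ∀ v ∈ (p i j h).support, v ∈ (p i' j' h').support →
        (v = b i ∨ v = b j) ∧ (v = b i' ∨ v = b j'))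

/-- `G` contains an odd theta subgraph through the vertex `w`: three pairwise
internally disjoint and edge-disjoint odd paths with the same distinct ends,
one of them passing through `w`. -/
def ContainsOddThetaThrough (G : SimpleGraph V) (w : V) : Prop :=
  ∃ (x y : V) (p1 p2 p3 : G.Walk x y), x ≠ y ∧
    p1.IsPath ∧ p2.IsPath ∧ p3.IsPath ∧
    Odd p1.length ∧ Odd p2.length ∧ Odd p3.length ∧
    (∀ v ∈ p1.support, v ∈ p2.support → v = x ∨ v = y) ∧
    (∀ v ∈ p1.support, v ∈ p3.support → v = x ∨ v = y) ∧
    (∀ v ∈ p2.support, v ∈ p3.support → v = x ∨ v = y) ∧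
    (∀ e ∈ p1.edges, e ∉ p2.edges) ∧
    (∀ e ∈ p1.edges, e ∉ p3.edges) ∧
    (∀ e ∈ p2.edges, e ∉ p3.edges) ∧
    (w ∈ p1.support ∨ w ∈ p2.support ∨ w ∈ p3.support)

/-- a graph is factor-critical if deleting any vertex leaves a graph with a
perfect matching -/
def FactorCritical {W : Type*} (H : SimpleGraph W) : Prop :=
  ∀ v : W, ∃ M : ((⊤ : H.Subgraph).deleteVerts {v}).coe.Subgraph,
    M.IsPerfectMatching


/-!
Connect the odd circuits `d` and `c` by a path `q` meeting `d` only at its start `s` and `c`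
only at its end `t` (a single vertex if they share one). As `G - s` is connected, some path `r`
leaves `d - s` and first returns to `q - s` or to `c`, at a vertex `t'`.
If `t' ∉ q`, then `q`, an arc of `c` from `t` to `t'` and `r` form a path between two vertices
of `d`, and choosing the arc of the right parity makes it odd.
If `t' ∈ q`, then `r`, the segment of `q` from `s` to `t'` and the arc of `d` of the right parity
close a new odd circuit through `t'`, and we repeat with it and the shorter path `q[t', t]`.
-/

namespace SimpleGraph

variable {G : SimpleGraph V}

namespace Walk

variable {u v w : V}

lemma exists_mem_support_ne {p : G.Walk u v} (hp : ¬p.Nil) (s : V) :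
    ∃ y ∈ p.support, y ≠ s := by
  by_cases hus : u = s
  · exact ⟨p.snd, List.mem_of_mem_tail (p.snd_mem_tail_support hp),
      hus ▸ (p.adj_snd hp).ne.symm⟩
  · exact ⟨u, p.start_mem_support, hus⟩

lemma IsPath.start_notMem_tail_support {p : G.Walk u v} (hp : p.IsPath) :
    u ∉ p.support.tail := by
  have h := hp.support_nodup
  rw [← p.cons_tail_support, List.nodup_cons] at h
  exact h.1

lemma IsPath.append {p : G.Walk u v} {q : G.Walk v w} (hp : p.IsPath) (hq : q.IsPath)
    (h : ∀ x ∈ p.support, x ∈ q.support → x = v) : (p.append q).IsPath := by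
  refine IsPath.mk' ?_
  rw [support_append]
  refine hp.support_nodup.append hq.support_nodup.tail fun x hx hx' => ?_
  exact hq.start_notMem_tail_support (h x hx (List.mem_of_mem_tail hx') ▸ hx')

lemma IsPath.isCycle_append_of_inter {p : G.Walk u v} {q : G.Walk v u} (hp : p.IsPath)
    (hq : q.IsPath) (h : ∀ x ∈ p.support, x ∈ q.support → x = u ∨ x = v)
    (hn : 1 < p.length ∨ 1 < q.length) : (p.append q).IsCycle := by
  refine hp.isCycle_append hq (fun x hxp hxq => ?_) hn
  rcases h x (List.mem_of_mem_tail hxp) (List.mem_of_mem_tail hxq) with rfl | rfl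
  · exact hp.start_notMem_tail_support hxp
  · exact hq.start_notMem_tail_support hxq

lemma exists_walk_to_first_mem (p : G.Walk u v) {T : Set V} (hv : v ∈ T) :
    ∃ t ∈ T, ∃ q : G.Walk u t, q.support ⊆ p.support ∧ ∀ x ∈ q.support, x ∈ T → x = t := by
  induction p with
  | nil => exact ⟨_, hv, nil, by simp, by simp⟩
  | @cons a _ _ hab p ih =>
    by_cases ha : a ∈ T
    · exact ⟨a, ha, nil, by simp, by simp⟩
    · obtain ⟨t, ht, q, hqp, hqT⟩ := ih hv
      refine ⟨t, ht, cons hab q, by simpa using List.cons_subset_cons a hqp, ?_⟩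
      simp only [support_cons, List.mem_cons, forall_eq_or_imp]
      exact ⟨fun h => absurd h ha, hqT⟩

variable [DecidableEq V]

lemma IsPath.eq_of_mem_takeUntil_of_mem_dropUntil {p : G.Walk u v} (hp : p.IsPath)
    (h : w ∈ p.support) {x : V} (hx₁ : x ∈ (p.takeUntil w h).support)
    (hx₂ : x ∈ (p.dropUntil w h).support) : x = w := by
  by_contra hxw
  have hsplit : ((p.takeUntil w h).append (p.dropUntil w h)).IsPath := (p.take_spec h).symm ▸ hp
  exact hsplit.ne_of_mem_support_of_append hxw hx₁ hx₂ rfl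

lemma exists_isPath_between_sets (p : G.Walk u v) {A T : Set V} (hu : u ∈ A) (hv : v ∈ T) :
    ∃ s ∈ A, ∃ t ∈ T, ∃ r : G.Walk s t, r.IsPath ∧ r.support ⊆ p.support ∧
      (∀ x ∈ r.support, x ∈ A → x = s) ∧ (∀ x ∈ r.support, x ∈ T → x = t) := by
  obtain ⟨t, ht, q, hqp, hqT⟩ := p.exists_walk_to_first_mem hv
  obtain ⟨s, hs, q', hq'q, hq'A⟩ := q.reverse.exists_walk_to_first_mem (T := A) hu
  have hr : q'.reverse.bypass.support ⊆ q'.support := fun x hx => by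
    simpa using q'.reverse.support_bypass_subset_support hx
  have hrq : q'.reverse.bypass.support ⊆ q.support := fun x hx => by
    simpa using hq'q (hr hx)
  exact ⟨s, hs, t, ht, q'.reverse.bypass, bypass_isPath _, List.Subset.trans hrq hqp,
    fun x hx => hq'A x (hr hx), fun x hx => hqT x (hrq hx)⟩

lemma IsCycle.exists_arcs {c : G.Walk u u} (hc : c.IsCycle) {s s' : V} (hs : s ∈ c.support)
    (hs' : s' ∈ c.support) (hne : s ≠ s') :
    ∃ a₁ a₂ : G.Walk s s', a₁.IsPath ∧ a₂.IsPath ∧ a₁.support ⊆ c.support ∧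
      a₂.support ⊆ c.support ∧ a₁.length + a₂.length = c.length := by
  set c' := c.rotate s hs
  have hc' : c'.IsCycle := hc.rotate hs
  have hs'c' : s' ∈ c'.support := (mem_support_rotate_iff ..).2 hs'
  have hc'c : c'.support ⊆ c.support := fun x hx => (mem_support_rotate_iff ..).1 hx
  have hsplit := c'.take_spec hs'c'
  refine ⟨c'.takeUntil s' hs'c', (c'.dropUntil s' hs'c').reverse, hc'.isPath_takeUntil hs'c',
    (IsCycle.isPath_of_append_right (not_nil_of_ne hne) (hsplit.symm ▸ hc')).reverse,
    List.Subset.trans (c'.support_takeUntil_subset_support hs'c') hc'c, ?_, ?_⟩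
  · simpa using List.Subset.trans (c'.support_dropUntil_subset_support hs'c') hc'c
  · rw [length_reverse, ← length_append, hsplit, length_rotate]

lemma IsCycle.exists_arc_odd_add {c : G.Walk u u} (hc : c.IsCycle) (hodd : Odd c.length)
    {s s' : V} (hs : s ∈ c.support) (hs' : s' ∈ c.support) (hne : s ≠ s') (n : ℕ) :
    ∃ a : G.Walk s s', a.IsPath ∧ a.support ⊆ c.support ∧ Odd (n + a.length) := by
  obtain ⟨a₁, a₂, h₁, h₂, hs₁, hs₂, hlen⟩ := hc.exists_arcs hs hs' hne
  by_cases hodd₁ : Odd (n + a₁.length)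
  · exact ⟨a₁, h₁, hs₁, hodd₁⟩
  · refine ⟨a₂, h₂, hs₂, ?_⟩
    rw [Nat.not_odd_iff_even, Nat.even_iff] at hodd₁
    rw [Nat.odd_iff] at hodd ⊢
    omega

lemma IsCycle.exists_odd_isCycle_append {c : G.Walk u u} (hc : c.IsCycle)
    (hodd : Odd c.length) {s s' : V} (hs : s ∈ c.support) (hs' : s' ∈ c.support)
    (hne : s ≠ s') {p : G.Walk s s'} (hp : p.IsPath)
    (hpc : ∀ x ∈ p.support, x ∈ c.support → x = s ∨ x = s') :
    ∃ e : G.Walk s s, e.IsCycle ∧ Odd e.length ∧ p.support ⊆ e.support ∧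
      ∀ x ∈ e.support, x ∈ p.support ∨ x ∈ c.support := by
  obtain ⟨a, ha, hac, hodd'⟩ := hc.exists_arc_odd_add hodd hs' hs hne.symm p.length
  have hp₀ : p.length ≠ 0 := fun h => hne (eq_of_length_eq_zero h)
  have ha₀ : a.length ≠ 0 := fun h => hne (eq_of_length_eq_zero h).symm
  -- if `p` is a single edge, the odd total length forces `a` to be longer
  have hn : 1 < p.length ∨ 1 < a.length := by
    rw [Nat.odd_iff] at hodd'
    omega
  refine ⟨p.append a, hp.isCycle_append_of_inter ha (fun x hxp hxa => hpc x hxp (hac hxa)) hn,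
    by rwa [length_append], fun x hx => by simp [hx], fun x hx => ?_⟩
  rw [mem_support_append_iff] at hx
  exact hx.imp_right fun h => hac h

lemma IsCycle.exists_odd_isCycle_through_segment {x s t s' t' : V} {d : G.Walk x x}
    (hd : d.IsCycle) (od : Odd d.length) {q : G.Walk s t} {r : G.Walk s' t'} (hq : q.IsPath)
    (hr : r.IsPath) (hs : s ∈ d.support) (hs' : s' ∈ d.support) (hs's : s' ≠ s)
    (hqd : ∀ y ∈ q.support, y ∈ d.support → y = s)
    (hrd : ∀ y ∈ r.support, y ∈ d.support → y = s')
    (hrq : ∀ y ∈ r.support, y ∈ q.support → y = t') (ht'q : t' ∈ q.support) :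
    ∃ e : G.Walk s s, e.IsCycle ∧ Odd e.length ∧ t' ∈ e.support ∧
      (∀ y ∈ (q.dropUntil t' ht'q).support, y ∈ e.support → y = t') ∧
      ∀ y ∈ e.support, y ∈ q.support ∨ y ∈ r.support ∨ y ∈ d.support := by
  set q₁ := q.takeUntil t' ht'q
  have hq₁q : q₁.support ⊆ q.support := q.support_takeUntil_subset_support ht'q
  have hq₂q := q.support_dropUntil_subset_support ht'q
  have hsplit : ∀ y ∈ q₁.support, y ∈ (q.dropUntil t' ht'q).support → y = t' := fun y =>
    hq.eq_of_mem_takeUntil_of_mem_dropUntil ht'q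
  have hp : (q₁.append r.reverse).IsPath := (hq.takeUntil ht'q).append hr.reverse
    fun y hy₁ hyr => hrq y (by simpa using hyr) (hq₁q hy₁)
  obtain ⟨e, he, oe, hpe, hep⟩ := hd.exists_odd_isCycle_append od hs hs' hs's.symm hp
    fun y hy hyd => by
      rw [mem_support_append_iff, support_reverse, List.mem_reverse] at hy
      exact hy.imp (fun hy₁ => hqd y (hq₁q hy₁) hyd) (fun hyr => hrd y hyr hyd)
  have hesub : ∀ y ∈ e.support, y ∈ q₁.support ∨ y ∈ r.support ∨ y ∈ d.support :=
    fun y hy => by simpa [or_assoc] using hep y hy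
  refine ⟨e, he, oe, hpe (by simp), fun y hy₂ hye => ?_,
    fun y hy => (hesub y hy).imp_left fun h => hq₁q h⟩
  rcases hesub y hye with hy₁ | hyr | hyd
  · exact hsplit y hy₁ hy₂
  · exact hrq y hyr (hq₂q hy₂)
  · -- the segment after `t'` avoids `s`, the only vertex of `q` on `d`
    have hys : y = s := hqd y (hq₂q hy₂) hyd
    have ht's : t' ≠ s := fun h => hs's ((hrd t' r.end_mem_support (h ▸ hs)).symm.trans h)
    exact absurd (hsplit s q₁.start_mem_support (hys ▸ hy₂)) ht's.symm

end Walk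

open Walk

lemma exists_isPath_avoiding_between
    (hG : ∀ v : V, ((⊤ : G.Subgraph).deleteVerts {v}).coe.Connected) [DecidableEq V]
    {A T : Set V} {s a b : V} (ha : a ∈ A) (has : a ≠ s) (hb : b ∈ T) (hbs : b ≠ s) :
    ∃ s' ∈ A, ∃ t' ∈ T, ∃ r : G.Walk s' t', r.IsPath ∧ s ∉ r.support ∧
      (∀ x ∈ r.support, x ∈ A → x = s') ∧ (∀ x ∈ r.support, x ∈ T → x = t') := by
  obtain ⟨p⟩ := hG s ⟨a, by simp [has]⟩ ⟨b, by simp [hbs]⟩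
  obtain ⟨s', hs', t', ht', r, hr, hrp, hrA, hrT⟩ :=
    (p.map (Subgraph.hom _)).exists_isPath_between_sets ha hb
  refine ⟨s', hs', t', ht', r, hr, fun hs => ?_, hrA, hrT⟩
  obtain ⟨⟨x, hx⟩, -, hxs⟩ := List.mem_map.1 (Walk.support_map (Subgraph.hom _) p ▸ hrp hs)
  simp only [Subgraph.hom_apply] at hxs
  simp [hxs] at hx

theorem containsOddC3Plus_of_disjoint_paths [DecidableEq V] {x w s t s' t' : V}
    {d : G.Walk x x} {c : G.Walk w w} (hd : d.IsCycle) (od : Odd d.length) (hc : c.IsCycle)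
    (oc : Odd c.length) {q : G.Walk s t} {r : G.Walk s' t'} (hq : q.IsPath) (hr : r.IsPath)
    (hs : s ∈ d.support) (hs' : s' ∈ d.support) (ht : t ∈ c.support) (ht' : t' ∈ c.support)
    (hqd : ∀ y ∈ q.support, y ∈ d.support → y = s)
    (hqc : ∀ y ∈ q.support, y ∈ c.support → y = t)
    (hrd : ∀ y ∈ r.support, y ∈ d.support → y = s')
    (hrc : ∀ y ∈ r.support, y ∈ c.support → y = t')
    (hqr : ∀ y ∈ r.support, y ∉ q.support)
    (hdc : ∀ y ∈ d.support, y ∈ c.support → y ∈ q.support) :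
    ContainsOddC3Plus G := by
  have hs's : s' ≠ s := fun h => hqr s' r.start_mem_support (h ▸ q.start_mem_support)
  have ht't : t' ≠ t := fun h => hqr t' r.end_mem_support (h ▸ q.end_mem_support)
  obtain ⟨b, hb, hbc, hodd⟩ := hc.exists_arc_odd_add oc ht ht' ht't.symm (q.length + r.length)
  have hbr : (b.append r.reverse).IsPath :=
    hb.append hr.reverse fun y hyb hyr => hrc y (by simpa using hyr) (hbc hyb)
  have hp : (q.append (b.append r.reverse)).IsPath := by
    refine hq.append hbr fun y hyq hy => ?_
    rw [mem_support_append_iff, support_reverse, List.mem_reverse] at hy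
    exact hy.elim (fun hyb => hqc y hyq (hbc hyb)) (fun hyr => absurd hyq (hqr y hyr))
  refine ⟨x, d, s, s', q.append (b.append r.reverse), hd, od, hp, ?_, hs's.symm, hs, hs',
    fun y hy hyd => ?_⟩
  · rw [length_append, length_append, length_reverse]
    convert hodd using 1
    omega
  · simp only [mem_support_append_iff, support_reverse, List.mem_reverse] at hy
    rcases hy with hyq | hyb | hyr
    · exact .inl (hqd y hyq hyd)
    · exact .inl (hqd y (hdc y hyd (hbc hyb)) hyd)
    · exact .inr (hrd y hyr hyd)

theorem containsOddC3Plus_of_isPath_between_cycles [DecidableEq V]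
    (hG : ∀ v : V, ((⊤ : G.Subgraph).deleteVerts {v}).coe.Connected)
    {w t : V} {c : G.Walk w w} (hc : c.IsCycle) (oc : Odd c.length) (ht : t ∈ c.support)
    {x s : V} {d : G.Walk x x} (hd : d.IsCycle) (od : Odd d.length) (hs : s ∈ d.support)
    {q : G.Walk s t} (hq : q.IsPath)
    (hqd : ∀ y ∈ q.support, y ∈ d.support → y = s)
    (hqc : ∀ y ∈ q.support, y ∈ c.support → y = t)
    (hdc : ∀ y ∈ d.support, y ∈ c.support → y ∈ q.support) :
    ContainsOddC3Plus G := by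
  induction hn : q.length using Nat.strong_induction_on generalizing x s d q with
  | _ n ih =>
  obtain ⟨y, hyd, hys⟩ := exists_mem_support_ne hd.not_nil s
  obtain ⟨z, hzc, hzs⟩ := exists_mem_support_ne hc.not_nil s
  obtain ⟨s', hs', t', ht', r, hr, hrs, hrd, hrT⟩ := exists_isPath_avoiding_between hG
    (A := {y | y ∈ d.support}) (T := {y | y ∈ q.support ∨ y ∈ c.support})
    hyd hys (Or.inr hzc) hzs
  have hs's : s' ≠ s := fun h => hrs (h ▸ r.start_mem_support)
  have hrq : ∀ y ∈ r.support, y ∈ q.support → y = t' := fun y hy hyq => hrT y hy (.inl hyq)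
  have hrc : ∀ y ∈ r.support, y ∈ c.support → y = t' := fun y hy hyc => hrT y hy (.inr hyc)
  by_cases ht'q : t' ∈ q.support
  · have ht's : t' ≠ s := fun h => hrs (h ▸ r.end_mem_support)
    obtain ⟨e, he, oe, ht'e, hq₂e, hesub⟩ :=
      hd.exists_odd_isCycle_through_segment od hq hr hs hs' hs's hqd hrd hrq ht'q
    refine ih _ (hn ▸ length_dropUntil_lt_length ht'q ht's) he oe ht'e (hq.dropUntil ht'q) hq₂e
      (fun y hy => hqc y (q.support_dropUntil_subset_support ht'q hy)) (fun y hye hyc => ?_) rfl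
    rcases hesub y hye with hyq | hyr | hyd
    · exact (hqc y hyq hyc).symm ▸ end_mem_support _
    · exact (hrc y hyr hyc).symm ▸ start_mem_support _
    · exact (hqc y (hdc y hyd hyc) hyc).symm ▸ end_mem_support _
  · exact containsOddC3Plus_of_disjoint_paths hd od hc oc hq hr hs hs' ht
      (ht'.resolve_left ht'q) hqd hqc hrd hrc (fun y hy hyq => ht'q (hrq y hy hyq ▸ hyq)) hdc

end SimpleGraph

theorem stmt16_general {V : Type*} [DecidableEq V] (G : SimpleGraph V)
    (hG : TwoConnected G) (u w : V) (c1 : G.Walk u u) (c2 : G.Walk w w)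
    (h1 : c1.IsCycle) (h2 : c2.IsCycle) (o1 : Odd c1.length) (o2 : Odd c2.length)
    (hshare : (c1.support.toFinset ∩ c2.support.toFinset).card ≤ 1) :
    ContainsOddC3Plus G := by
  obtain ⟨hconn, -, hdel⟩ := hG
  by_cases hcommon : ∃ v ∈ c1.support, v ∈ c2.support
  · obtain ⟨v, hv1, hv2⟩ := hcommon
    have hunique : ∀ y ∈ c1.support, y ∈ c2.support → y = v := fun y hy1 hy2 =>
      Finset.card_le_one.1 hshare y (by simp [hy1, hy2]) v (by simp [hv1, hv2])
    exact containsOddC3Plus_of_isPath_between_cycles hdel h2 o2 hv2 h1 o1 hv1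
      (q := Walk.nil) Walk.IsPath.nil (by simp) (by simp) (by simpa using hunique)
  · obtain ⟨s, hs, t, ht, r, hr, -, hr1, hr2⟩ :=
      (hconn u w).some.exists_isPath_between_sets (A := {y | y ∈ c1.support})
        (T := {y | y ∈ c2.support}) c1.start_mem_support c2.start_mem_support
    exact containsOddC3Plus_of_isPath_between_cycles hdel h2 o2 ht h1 o1 hs hr hr1 hr2
      fun y hy1 hy2 => absurd ⟨y, hy1, hy2⟩ hcommon

/-- a 2-connected graph with two odd circuits sharing at most
one vertex contains a totally odd subdivision of `C3+`. -/
theorem stmt16 {V : Type*} [Fintype V] [DecidableEq V] (G : SimpleGraph V)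
    (hG : TwoConnected G) (u w : V) (c1 : G.Walk u u) (c2 : G.Walk w w)
    (h1 : c1.IsCycle) (h2 : c2.IsCycle) (o1 : Odd c1.length) (o2 : Odd c2.length)
    (hshare : (c1.support.toFinset ∩ c2.support.toFinset).card ≤ 1) :
    ContainsOddC3Plus G :=
  stmt16_general G hG u w c1 c2 h1 h2 o1 o2 hshare
end

section
/- Any ear-decomposition of a totally odd subdivision of K4 whose first ear is an odd circuit has exactly three ears, at least two of which are odd. -/
open SimpleGraph

variable {V : Type*}

/-! Adding an ear of length `ℓ` adds `ℓ` edges but only `ℓ - 1` vertices, and a circuit has as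
many edges as vertices, so `|E| - |V|` counts the ears after the first. The six branch paths of a
totally odd subdivision of `K₄` likewise give `|E| - |V| = 6 - 4 = 2`, and `|E|` is a sum of six
odd lengths, hence even. So there are two further ears, and since the first one is odd, their
lengths have odd sum: exactly one of them is odd. -/

lemma List.Nodup.ncard_setOf_mem {α : Type*} {l : List α} (h : l.Nodup) :
    {x | x ∈ l}.ncard = l.length := by
  classical
  rw [show {x | x ∈ l} = (l.toFinset : Set α) by ext; simp, Set.ncard_coe_finset,
    List.toFinset_card_of_nodup h]

namespace SimpleGraph.Walk

variable {V : Type*} {G : SimpleGraph V} {u v : V}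

lemma IsTrail.ncard_edgeSet {p : G.Walk u v} (hp : p.IsTrail) : p.edgeSet.ncard = p.length := by
  rw [Walk.edgeSet, hp.edges_nodup.ncard_setOf_mem, length_edges]

lemma IsCycle.ncard_support {c : G.Walk u u} (hc : c.IsCycle) :
    {w | w ∈ c.support}.ncard = c.length := by
  have hu : u ∈ c.support.tail := end_mem_tail_support hc.not_nil
  have hsupp : {w | w ∈ c.support} = {w | w ∈ c.support.tail} := by
    ext w
    change w ∈ c.support ↔ w ∈ c.support.tail
    rw [← c.cons_tail_support, List.mem_cons, List.tail_cons]
    exact ⟨fun h => h.elim (· ▸ hu) id, Or.inr⟩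
  rw [hsupp, hc.support_nodup.ncard_setOf_mem, List.length_tail, length_support]
  rfl

lemma IsPath.ncard_support_sdiff_ends {p : G.Walk u v} (hp : p.IsPath) (huv : u ≠ v) :
    ({w | w ∈ p.support} \ {u, v}).ncard + 1 = p.length := by
  have hends : ({u, v} : Set V) ⊆ {w | w ∈ p.support} := by
    rintro w (rfl | rfl)
    exacts [p.start_mem_support, p.end_mem_support]
  have hlen : 1 ≤ p.length := Nat.one_le_iff_ne_zero.2 fun h => huv (eq_of_length_eq_zero h)
  rw [Set.ncard_sdiff hends (Set.toFinite _), hp.support_nodup.ncard_setOf_mem, length_support,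
    Set.ncard_pair huv]
  omega

end SimpleGraph.Walk

section Ears

variable {V : Type*} {G : SimpleGraph V}

lemma earsUnion_append_singleton {x : V} (base : G.Walk x x) (l : List (EarData G))
    (e : EarData G) : earsUnion base (l ++ [e]) = earsUnion base l ⊔ e.2.2.toSubgraph := by
  simp only [earsUnion, List.foldl_append, List.foldl_cons, List.foldl_nil]

namespace IsEar

variable [Finite V] {H : G.Subgraph} {e : EarData G}

lemma ncard_verts_sup (he : IsEar H e) :
    (H ⊔ e.2.2.toSubgraph).verts.ncard + 1 = H.verts.ncard + e.2.2.length := by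
  obtain ⟨hpath, hne, ha, hb, hint, -⟩ := he
  have hnew : {v | v ∈ e.2.2.support} \ H.verts = {v | v ∈ e.2.2.support} \ {e.1, e.2.1} := by
    ext v
    simp only [Set.mem_sdiff, Set.mem_insert_iff, Set.mem_singleton_iff]
    refine ⟨fun ⟨hv, hvH⟩ => ⟨hv, ?_⟩, fun ⟨hv, hvab⟩ => ⟨hv, ?_⟩⟩
    · rintro (rfl | rfl) <;> contradiction
    · exact hint v hv (fun h => hvab (Or.inl h)) (fun h => hvab (Or.inr h))
  rw [Subgraph.verts_sup, Walk.verts_toSubgraph, ← Set.union_sdiff_self,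
    Set.ncard_union_eq Set.disjoint_sdiff_right, hnew, add_assoc,
    hpath.ncard_support_sdiff_ends hne]

lemma ncard_edgeSet_sup (he : IsEar H e) :
    (H ⊔ e.2.2.toSubgraph).edgeSet.ncard = H.edgeSet.ncard + e.2.2.length := by
  rw [Subgraph.edgeSet_sup, Walk.edgeSet_toSubgraph,
    Set.ncard_union_eq (Set.disjoint_right.2 he.2.2.2.2.2 : Disjoint H.edgeSet e.2.2.edgeSet),
    he.1.isTrail.ncard_edgeSet]

end IsEar

namespace EarDecomposition

variable (ed : EarDecomposition G)

def earLengthSum (i : ℕ) : ℕ := ((ed.ears.take i).map fun e => e.2.2.length).sum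

lemma earsUnion_take_succ {i : ℕ} (hi : i < ed.ears.length) :
    earsUnion ed.base (ed.ears.take (i + 1))
      = earsUnion ed.base (ed.ears.take i) ⊔ (ed.ears.get ⟨i, hi⟩).2.2.toSubgraph := by
  rw [List.take_add_one, List.getElem?_eq_getElem hi, Option.toList_some,
    earsUnion_append_singleton, List.get_eq_getElem]

lemma earLengthSum_succ {i : ℕ} (hi : i < ed.ears.length) :
    ed.earLengthSum (i + 1) = ed.earLengthSum i + (ed.ears.get ⟨i, hi⟩).2.2.length := by
  simp only [earLengthSum, List.take_add_one, List.getElem?_eq_getElem hi, Option.toList_some,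
    List.map_append, List.sum_append, List.map_cons, List.map_nil, List.sum_cons, List.sum_nil,
    add_zero, List.get_eq_getElem]

variable [Finite V]

lemma ncard_edgeSet_earsUnion_take (i : ℕ) (hi : i ≤ ed.ears.length) :
    (earsUnion ed.base (ed.ears.take i)).edgeSet.ncard = ed.base.length + ed.earLengthSum i := by
  induction i with
  | zero =>
    simp [earsUnion, Walk.edgeSet_toSubgraph, ed.base_cycle.isTrail.ncard_edgeSet, earLengthSum]
  | succ i ih =>
    replace hi : i < ed.ears.length := hi
    rw [ed.earsUnion_take_succ hi, (ed.ear_cond i hi).ncard_edgeSet_sup, ih hi.le,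
      ed.earLengthSum_succ hi, add_assoc]

lemma ncard_verts_earsUnion_take (i : ℕ) (hi : i ≤ ed.ears.length) :
    (earsUnion ed.base (ed.ears.take i)).verts.ncard + i = ed.base.length + ed.earLengthSum i := by
  induction i with
  | zero =>
    simp [earsUnion, Walk.verts_toSubgraph, ed.base_cycle.ncard_support, earLengthSum]
  | succ i ih =>
    replace hi : i < ed.ears.length := hi
    have hear := (ed.ear_cond i hi).ncard_verts_sup
    have hprev := ih hi.le
    rw [ed.earsUnion_take_succ hi, ed.earLengthSum_succ hi]
    omega

lemma ncard_edgeSet_eq :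
    G.edgeSet.ncard = Nat.card V + ed.ears.length ∧
      G.edgeSet.ncard = ed.base.length + (ed.ears.map fun e => e.2.2.length).sum := by
  have hE := ed.ncard_edgeSet_earsUnion_take _ le_rfl
  have hV := ed.ncard_verts_earsUnion_take _ le_rfl
  simp only [earLengthSum, List.take_length, ed.union_top, Subgraph.edgeSet_top,
    Subgraph.verts_top, Set.ncard_univ] at hE hV
  omega

end EarDecomposition

end Ears

namespace SimpleGraph

variable {V ι : Type*} [Finite V] [Fintype ι] {G : SimpleGraph V} {s t : ι → V}
  {q : ∀ i, G.Walk (s i) (t i)}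

lemma ncard_edgeSet_eq_sum_length (hq : ∀ i, (q i).IsTrail)
    (hdisj : Pairwise fun i j => Disjoint (q i).edgeSet (q j).edgeSet)
    (hcover : ⨆ i, (q i).toSubgraph = ⊤) :
    G.edgeSet.ncard = ∑ i, (q i).length := by
  have hE : G.edgeSet = ⋃ i, (q i).edgeSet := by
    simp only [← Subgraph.edgeSet_top, ← hcover, Subgraph.edgeSet_iSup, Walk.edgeSet_toSubgraph]
  rw [hE, Set.ncard_iUnion_of_finite (fun _ => Set.toFinite _) hdisj, finsum_eq_sum_of_fintype]
  exact Finset.sum_congr rfl fun i _ => (hq i).ncard_edgeSet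

lemma card_add_card_eq_ncard_add_sum_length (B : Set V) (hq : ∀ i, (q i).IsPath)
    (hst : ∀ i, s i ≠ t i) (hends : ∀ i, s i ∈ B ∧ t i ∈ B)
    (hB : ∀ i, ∀ v ∈ (q i).support, v ∈ B → v = s i ∨ v = t i)
    (hdisj : ∀ i j, i ≠ j → ∀ v ∈ (q i).support, v ∈ (q j).support → v = s i ∨ v = t i)
    (hcover : ⨆ i, (q i).toSubgraph = ⊤) :
    Nat.card V + Fintype.card ι = B.ncard + ∑ i, (q i).length := by
  set I : ι → Set V := fun i => {v | v ∈ (q i).support} \ {s i, t i}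
  have huniv : Set.univ = B ∪ ⋃ i, I i := by
    refine (Set.subset_univ _).antisymm' fun v _ => ?_
    have hv : v ∈ (⊤ : G.Subgraph).verts := trivial
    rw [← hcover, Subgraph.verts_iSup, Set.mem_iUnion] at hv
    obtain ⟨i, hv⟩ := hv
    by_cases hvst : v = s i ∨ v = t i
    · exact Or.inl (hvst.elim (· ▸ (hends i).1) (· ▸ (hends i).2))
    · exact Or.inr (Set.mem_iUnion.2 ⟨i, (q i).mem_verts_toSubgraph.1 hv, hvst⟩)
  have hdisjI : Pairwise fun i j => Disjoint (I i) (I j) := fun i j hij =>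
    Set.disjoint_left.2 fun v ⟨hv, hvst⟩ ⟨hv', _⟩ => hvst (hdisj i j hij v hv hv')
  have hdisjB : Disjoint B (⋃ i, I i) := by
    refine Set.disjoint_right.2 fun v hvI hvB => ?_
    obtain ⟨i, hv, hvst⟩ := Set.mem_iUnion.1 hvI
    exact hvst (hB i v hv hvB)
  rw [← Set.ncard_univ, huniv, Set.ncard_union_eq hdisjB,
    Set.ncard_iUnion_of_finite (fun _ => Set.toFinite _) hdisjI, finsum_eq_sum_of_fintype,
    ← Finset.sum_congr rfl fun i _ => (hq i).ncard_support_sdiff_ends (hst i),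
    Finset.sum_add_distrib, Finset.sum_const, smul_eq_mul, mul_one, Finset.card_univ, add_assoc]

end SimpleGraph

lemma Function.Injective.eq_of_two_mem_image_pair {α β : Type*} [LinearOrder α] {b : α → β}
    (hb : Function.Injective b) {i j i' j' : α} (hij : i < j) (hij' : i' < j') {u v : β}
    (huv : u ≠ v) (hu : (u = b i ∨ u = b j) ∧ (u = b i' ∨ u = b j'))
    (hv : (v = b i ∨ v = b j) ∧ (v = b i' ∨ v = b j')) : (i, j) = (i', j') := by
  obtain ⟨hu | hu, hu' | hu'⟩ := hu <;> obtain ⟨hv | hv, hv' | hv'⟩ := hv <;> subst hu hv <;>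
    simp only [hb.eq_iff, hb.ne_iff] at * <;> subst_vars <;> first | rfl | order

namespace IsTotallyOddK4

variable {V : Type*} {G : SimpleGraph V} {b : Fin 4 → V}
  {p : ∀ i j : Fin 4, i < j → G.Walk (b i) (b j)}
  (hdisj : ∀ i j h i' j' h', (i, j) ≠ (i', j') →
    ∀ v ∈ (p i j h).support, v ∈ (p i' j' h').support →
      (v = b i ∨ v = b j) ∧ (v = b i' ∨ v = b j'))
include hdisj

lemma eq_or_eq_of_branch_vertex_mem_support {i j m : Fin 4} (hij : i < j)
    (hm : b m ∈ (p i j hij).support) : b m = b i ∨ b m = b j := by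
  rcases eq_or_ne m i with rfl | hmi
  · exact Or.inl rfl
  rcases eq_or_ne m j with rfl | hmj
  · exact Or.inr rfl
  rcases hmi.lt_or_gt with hlt | hgt
  · exact (hdisj i j hij m i hlt (by simp [hmi.symm]) _ hm (p m i hlt).start_mem_support).1
  · exact (hdisj i j hij i m hgt (by simp [hmj.symm]) _ hm (p i m hgt).end_mem_support).1

lemma pairwise_disjoint_edgeSet_branch_paths (hb : Function.Injective b) :
    Pairwise fun ij kl : {ij : Fin 4 × Fin 4 // ij.1 < ij.2} =>
      Disjoint (p _ _ ij.2).edgeSet (p _ _ kl.2).edgeSet := by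
  intro ij kl hne
  refine Set.disjoint_left.2 fun e he he' => ?_
  induction e using Sym2.ind with | h u v =>
  have hcommon := hdisj _ _ ij.2 _ _ kl.2 fun h => hne (Subtype.ext h)
  exact hne <| Subtype.ext <| hb.eq_of_two_mem_image_pair ij.2 kl.2
    ((p _ _ ij.2).adj_of_mem_edges he).ne
    (hcommon u ((p _ _ _).fst_mem_support_of_mem_edges he)
      ((p _ _ _).fst_mem_support_of_mem_edges he'))
    (hcommon v ((p _ _ _).snd_mem_support_of_mem_edges he)
      ((p _ _ _).snd_mem_support_of_mem_edges he'))

end IsTotallyOddK4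

lemma IsTotallyOddK4.ncard_edgeSet {V : Type*} [Finite V] {G : SimpleGraph V}
    (hG : IsTotallyOddK4 G) : G.edgeSet.ncard = Nat.card V + 2 ∧ Even G.edgeSet.ncard := by
  obtain ⟨b, p, hb, hp, hdisj, hcover⟩ := hG
  let q (ij : {ij : Fin 4 × Fin 4 // ij.1 < ij.2}) := p _ _ ij.2
  have hcover' : ⨆ ij, (q ij).toSubgraph = ⊤ := by
    simp only [q, ← hcover, iSup_subtype, iSup_prod]
  have hE := ncard_edgeSet_eq_sum_length (q := q) (fun ij => (hp _ _ ij.2).1.isTrail)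
    (pairwise_disjoint_edgeSet_branch_paths hdisj hb) hcover'
  have hV := card_add_card_eq_ncard_add_sum_length (q := q) (Set.range b)
    (fun ij => (hp _ _ ij.2).1) (fun ij => hb.ne ij.2.ne) (fun _ => ⟨⟨_, rfl⟩, ⟨_, rfl⟩⟩)
    (fun ij _ hv ⟨_, hm⟩ => hm ▸ eq_or_eq_of_branch_vertex_mem_support hdisj ij.2 (hm ▸ hv))
    (fun ij kl hne v hv hv' => (hdisj _ _ _ _ _ _ (fun h => hne (Subtype.ext h)) v hv hv').1)
    hcover'
  have hcard : Fintype.card {ij : Fin 4 × Fin 4 // ij.1 < ij.2} = 6 := by decide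
  rw [Set.ncard_range_of_injective hb, Nat.card_fin, hcard] at hV
  refine ⟨by omega, ?_⟩
  rw [hE, Finset.even_sum_iff_even_card_odd, Finset.filter_true_of_mem fun ij _ => (hp _ _ ij.2).2,
    Finset.card_univ, hcard]
  decide

/-- any ear-decomposition of a totally odd subdivision of `K₄`
whose first ear is an odd circuit has exactly three ears, at least two of
which are odd. -/
theorem stmt17 {V : Type*} [Fintype V] (G : SimpleGraph V)
    (hG : IsTotallyOddK4 G) (ed : EarDecomposition G)
    (hodd : Odd ed.base.length) :
    ed.ears.length + 1 = 3 ∧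
    2 ≤ (ed.base.length :: ed.ears.map (fun e => e.2.2.length)).countP
          (fun n => n % 2 == 1) := by
  obtain ⟨hK4, hEven⟩ := hG.ncard_edgeSet
  obtain ⟨hears, hlen⟩ := ed.ncard_edgeSet_eq
  obtain ⟨e₁, e₂, he⟩ := List.length_eq_two.1 (show ed.ears.length = 2 by omega)
  rw [he] at hlen
  rw [hlen, List.map_cons, List.map_cons, List.map_nil, List.sum_cons, List.sum_cons,
    List.sum_nil, add_zero, Nat.even_iff] at hEven
  rw [Nat.odd_iff] at hodd
  refine ⟨by simp [he], ?_⟩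
  simp only [he, List.map_cons, List.map_nil, List.countP_cons, List.countP_nil, beq_iff_eq]
  split_ifs <;> omega
end
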